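/- arXiv:2507.13971 — 3 statements merged into one kernel-verified Lean document; each statement's English description precedes it below -/
import Mathlib

section
/- Let G act on a tree T without edge inversions, and let e = {u,v} be a collapsible edge, i.e., Stab(u) ≤ Stab(v) and u, v lie in different G-orbits. Let T' be the tree obtained by equivariantly collapsing the G-orbit of e (identifying the endpoints of each translate of e). Then the stabiliser of the image vertex φ(e) in T' equals Stab(v). -/
/-- The action of `G` on the vertices preserves adjacency (acts by simplicial
automorphisms). -/
def PreservesAdj (G : Type*) {V : Type*} [Group G] [MulAction G V]
    (T : SimpleGraph V) : Prop :=
  ∀ (g : G) (u v : V), T.Adj u v → T.Adj (g • u) (g • v)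

/-- The action has no edge inversions. -/
def NoInversions (G : Type*) {V : Type*} [Group G] [MulAction G V]
    (T : SimpleGraph V) : Prop :=
  ∀ (g : G) (u v : V), T.Adj u v → ¬ (g • u = v ∧ g • v = u)

/-- The relation identifying each translate `g • u` with `g • v`; the collapsed tree has
vertex set `Quot (collapseRel G u v)`. -/
def collapseRel (G : Type*) {V : Type*} [Group G] [MulAction G V] (u v : V) :
    V → V → Prop :=
  fun x y => ∃ g : G, x = g • u ∧ y = g • v

/-! Because `Stab(u) ≤ Stab(v)`, the rule `g • u ↦ g • v` is a well-defined retraction of the orbit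
of `u` onto the orbit of `v`; extended by the identity elsewhere, it is constant on the classes
of the collapse relation and fixes the orbit of `v`, which is disjoint from the orbit of `u`.
So two translates of `v` are identified in the collapsed tree only if they are equal. -/

open MulAction

section Collapse

variable {G V : Type*} [Group G] [MulAction G V] {u v : V}

theorem MulAction.smul_eq_smul_of_stabilizer_le (hstab : stabilizer G u ≤ stabilizer G v)
    {g h : G} (hgh : g • u = h • u) : g • v = h • v := by
  have hu : h⁻¹ * g ∈ stabilizer G u := by simp [mem_stabilizer_iff, mul_smul, hgh]
  simpa [mem_stabilizer_iff, mul_smul, inv_smul_eq_iff] using hstab hu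

open scoped Classical in
variable (G u v) in
noncomputable def collapseRetract (x : V) : V :=
  if hx : x ∈ orbit G u then hx.choose • v else x

theorem collapseRetract_smul_left (hstab : stabilizer G u ≤ stabilizer G v) (g : G) :
    collapseRetract G u v (g • u) = g • v := by
  have hx : g • u ∈ orbit G u := mem_orbit u g
  rw [collapseRetract, dif_pos hx]
  exact smul_eq_smul_of_stabilizer_le hstab hx.choose_spec

theorem collapseRetract_smul_right (horb : v ∉ orbit G u) (g : G) :
    collapseRetract G u v (g • v) = g • v := by
  have hx : g • v ∉ orbit G u := by rwa [mem_orbit_symm, orbit_smul, mem_orbit_symm]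
  rw [collapseRetract, dif_neg hx]

theorem collapseRetract_eq_of_collapseRel (hstab : stabilizer G u ≤ stabilizer G v)
    (horb : v ∉ orbit G u) {x y : V} (hxy : collapseRel G u v x y) :
    collapseRetract G u v x = collapseRetract G u v y := by
  obtain ⟨g, rfl, rfl⟩ := hxy
  rw [collapseRetract_smul_left hstab, collapseRetract_smul_right horb]

theorem collapse_mk_smul_eq_mk_smul_iff (hstab : stabilizer G u ≤ stabilizer G v)
    (horb : v ∉ orbit G u) (g h : G) :
    Quot.mk (collapseRel G u v) (g • v) = Quot.mk (collapseRel G u v) (h • v) ↔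
      g • v = h • v := by
  refine ⟨fun hq => ?_, congrArg _⟩
  have hr := congrArg (Quot.lift (collapseRetract G u v)
    fun _ _ => collapseRetract_eq_of_collapseRel hstab horb) hq
  simpa only [Quot.lift_mk, collapseRetract_smul_right horb] using hr

end Collapse

theorem collapse_vertex_stabilizer_general {G V : Type*} [Group G] [MulAction G V]
    (u v : V)
    (hstab : MulAction.stabilizer G u ≤ MulAction.stabilizer G v)
    (horb : v ∉ MulAction.orbit G u) :
    ∀ g : G, Quot.mk (collapseRel G u v) (g • v) = Quot.mk (collapseRel G u v) v ↔
      g ∈ MulAction.stabilizer G v := by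
  intro g
  simpa only [one_smul, mem_stabilizer_iff] using collapse_mk_smul_eq_mk_smul_iff hstab horb g 1

/-- After collapsing the orbit of a collapsible edge `e = {u,v}` (with
`Stab(u) ≤ Stab(v)` and `u, v` in distinct orbits), the stabiliser of the image vertex
`φ(e)` equals `Stab(v)`. -/
theorem collapse_vertex_stabilizer {G V : Type*} [Group G] [MulAction G V]
    (T : SimpleGraph V) (hT : T.IsTree)
    (hpres : PreservesAdj G T) (hinv : NoInversions G T)
    (u v : V) (he : T.Adj u v)
    (hstab : MulAction.stabilizer G u ≤ MulAction.stabilizer G v)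
    (horb : v ∉ MulAction.orbit G u) :
    ∀ g : G, Quot.mk (collapseRel G u v) (g • v) = Quot.mk (collapseRel G u v) v ↔
      g ∈ MulAction.stabilizer G v :=
  collapse_vertex_stabilizer_general u v hstab horb
end

section
/- Let G act on a tree T without edge inversions, let e be a collapsible edge, and let T' be obtained from T by the elementary collapse of e. Then every edge stabiliser for the action on T' is an edge stabiliser for the action on T, and every vertex stabiliser for T' is a vertex stabiliser for T. -/
open SimpleGraph MulAction

theorem SimpleGraph.IsAcyclic.apply_eq_of_mem_support {V : Type*} {T : SimpleGraph V}
    (hT : T.IsAcyclic) (f : T →g T) (hf : Function.Injective f) {a b : V}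
    (ha : f a = a) (hb : f b = b) {p : T.Walk a b} (hp : p.IsPath) {x : V}
    (hx : x ∈ p.support) : f x = x := by
  have hq : ((p.map f).copy ha hb).IsPath := by
    rw [Walk.isPath_copy]
    exact hp.map hf
  have hqp : (p.map f).copy ha hb = p :=
    congrArg Subtype.val ((hT.subsingleton_path a b).elim ⟨_, hq⟩ ⟨p, hp⟩)
  have hsupp : p.support.map f = p.support.map id := by
    rw [List.map_id, ← Walk.support_map, ← Walk.support_copy _ ha hb, hqp]
  exact List.map_inj_left.mp hsupp x hx

section Collapse

variable {G V : Type*} [Group G] [MulAction G V]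

theorem smul_ne_smul_of_not_mem_orbit {u v : V} (horb : v ∉ orbit G u) (g h : G) :
    g • u ≠ h • v := by
  intro hgh
  exact horb (mem_orbit_iff.mpr ⟨h⁻¹ * g, by rw [mul_smul, hgh, inv_smul_smul]⟩)

theorem smul_mem_orbit_iff {x u : V} (g : G) : g • x ∈ orbit G u ↔ x ∈ orbit G u := by
  rw [mem_orbit_symm, orbit_smul, mem_orbit_symm]

variable (G) in
noncomputable def collapseRep (u v x : V) : V :=
  open Classical in
  if h : ∃ g : G, g • u = x then h.choose • v else x

variable {u v : V}

theorem collapseRep_smul_self (hstab : stabilizer G u ≤ stabilizer G v) (g : G) :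
    collapseRep G u v (g • u) = g • v := by
  have hmem : ∃ k : G, k • u = g • u := ⟨g, rfl⟩
  have hfix : g⁻¹ * hmem.choose ∈ stabilizer G u := by
    rw [mem_stabilizer_iff, mul_smul, hmem.choose_spec, inv_smul_smul]
  have hv : g⁻¹ • hmem.choose • v = v := by rw [← mul_smul]; exact hstab hfix
  rw [collapseRep, dif_pos hmem, ← hv, smul_inv_smul, hv]

theorem collapseRep_of_not_mem_orbit {x : V} (hx : x ∉ orbit G u) :
    collapseRep G u v x = x := by
  rw [collapseRep, dif_neg (mem_orbit_iff.not.mp hx)]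

theorem collapseRep_smul (hstab : stabilizer G u ≤ stabilizer G v) (g : G) (x : V) :
    collapseRep G u v (g • x) = g • collapseRep G u v x := by
  by_cases hx : x ∈ orbit G u
  · obtain ⟨h, rfl⟩ := hx
    rw [smul_smul, collapseRep_smul_self hstab, collapseRep_smul_self hstab, mul_smul]
  · rw [collapseRep_of_not_mem_orbit hx,
      collapseRep_of_not_mem_orbit ((smul_mem_orbit_iff g).not.mpr hx)]

theorem quot_mk_collapseRep (hstab : stabilizer G u ≤ stabilizer G v) (x : V) :
    Quot.mk (collapseRel G u v) (collapseRep G u v x) = Quot.mk (collapseRel G u v) x := by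
  by_cases hx : x ∈ orbit G u
  · obtain ⟨h, rfl⟩ := hx
    rw [collapseRep_smul_self hstab]
    exact (Quot.sound ⟨h, rfl, rfl⟩).symm
  · rw [collapseRep_of_not_mem_orbit hx]

theorem quot_mk_collapseRel_eq_iff (hstab : stabilizer G u ≤ stabilizer G v)
    (horb : v ∉ orbit G u) (x y : V) :
    Quot.mk (collapseRel G u v) x = Quot.mk (collapseRel G u v) y ↔
      collapseRep G u v x = collapseRep G u v y := by
  constructor
  · have hresp : ∀ a b, collapseRel G u v a b → collapseRep G u v a = collapseRep G u v b := by
      rintro _ _ ⟨g, rfl, rfl⟩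
      have hgv : g • v ∉ orbit G u := (smul_mem_orbit_iff g).not.mpr horb
      rw [collapseRep_smul_self hstab, collapseRep_of_not_mem_orbit hgv]
    exact congrArg (Quot.lift _ hresp)
  · intro h
    rw [← quot_mk_collapseRep hstab x, h, quot_mk_collapseRep hstab]

theorem smul_eq_of_smul_collapseRep_eq {T : SimpleGraph V} (hT : T.IsAcyclic)
    (hpres : PreservesAdj G T) (he : T.Adj u v) (hstab : stabilizer G u ≤ stabilizer G v)
    (horb : v ∉ orbit G u) {x y : V} (hxy : T.Adj x y)
    (hne : collapseRep G u v x ≠ collapseRep G u v y) {g : G}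
    (hgx : g • collapseRep G u v x = collapseRep G u v x)
    (hgy : g • collapseRep G u v y = collapseRep G u v y) : g • x = x := by
  by_cases hx : x ∈ orbit G u
  swap
  · rwa [collapseRep_of_not_mem_orbit hx] at hgx
  obtain ⟨h, rfl⟩ := hx
  rw [collapseRep_smul_self hstab] at hgx hne
  let f : T →g T := ⟨(g • ·), hpres g _ _⟩
  have hf : Function.Injective f := MulAction.injective g
  have hxv : T.Adj (h • v) (h • u) := (hpres h u v he).symm
  have huv := smul_ne_smul_of_not_mem_orbit horb
  by_cases hy : y ∈ orbit G u
  · obtain ⟨k, rfl⟩ := hy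
    rw [collapseRep_smul_self hstab] at hgy hne
    have hp : (Walk.cons hxv (Walk.cons hxy (Walk.cons (hpres k u v he) .nil))).IsPath := by
      simp [Walk.isPath_def, hxy.ne, hne, (huv h h).symm, (huv k h).symm, huv h k, huv k k]
    exact hT.apply_eq_of_mem_support f hf hgx hgy hp (by simp)
  · rw [collapseRep_of_not_mem_orbit hy] at hgy hne
    have hp : (Walk.cons hxv (Walk.cons hxy .nil)).IsPath := by
      simp [Walk.isPath_def, hxy.ne, hne, (huv h h).symm]
    exact hT.apply_eq_of_mem_support f hf hgx hgy hp (by simp)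

end Collapse

theorem collapse_stabilizers_general {G V : Type*} [Group G] [MulAction G V]
    (T : SimpleGraph V) (hT : T.IsTree)
    (hpres : PreservesAdj G T)
    (u v : V) (he : T.Adj u v)
    (hstab : MulAction.stabilizer G u ≤ MulAction.stabilizer G v)
    (horb : v ∉ MulAction.orbit G u) :
    (∀ x : V, ∃ x' : V, ∀ g : G,
        Quot.mk (collapseRel G u v) (g • x) = Quot.mk (collapseRel G u v) x ↔
          g • x' = x') ∧
    (∀ x y : V, T.Adj x y →
        Quot.mk (collapseRel G u v) x ≠ Quot.mk (collapseRel G u v) y →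
        ∃ x' y' : V, T.Adj x' y' ∧ ∀ g : G,
          (Quot.mk (collapseRel G u v) (g • x) = Quot.mk (collapseRel G u v) x ∧
           Quot.mk (collapseRel G u v) (g • y) = Quot.mk (collapseRel G u v) y) ↔
          (g • x' = x' ∧ g • y' = y')) := by
  simp only [ne_eq, quot_mk_collapseRel_eq_iff hstab horb, collapseRep_smul hstab]
  refine ⟨fun x => ⟨collapseRep G u v x, fun g => Iff.rfl⟩, fun x y hxy hne => ⟨x, y, hxy, ?_⟩⟩
  intro g
  constructor
  · rintro ⟨hgx, hgy⟩
    exact ⟨smul_eq_of_smul_collapseRep_eq hT.isAcyclic hpres he hstab horb hxy hne hgx hgy,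
      smul_eq_of_smul_collapseRep_eq hT.isAcyclic hpres he hstab horb hxy.symm (Ne.symm hne)
        hgy hgx⟩
  · rintro ⟨hgx, hgy⟩
    rw [← collapseRep_smul hstab, ← collapseRep_smul hstab, hgx, hgy]
    exact ⟨rfl, rfl⟩

/-- After the elementary collapse of a collapsible edge `e = {u,v}`, every vertex
stabiliser of the collapsed tree is a vertex stabiliser of `T`, and every edge stabiliser
of the collapsed tree is an edge stabiliser of `T`. -/
theorem collapse_stabilizers {G V : Type*} [Group G] [MulAction G V]
    (T : SimpleGraph V) (hT : T.IsTree)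
    (hpres : PreservesAdj G T) (hinv : NoInversions G T)
    (u v : V) (he : T.Adj u v)
    (hstab : MulAction.stabilizer G u ≤ MulAction.stabilizer G v)
    (horb : v ∉ MulAction.orbit G u) :
    (∀ x : V, ∃ x' : V, ∀ g : G,
        Quot.mk (collapseRel G u v) (g • x) = Quot.mk (collapseRel G u v) x ↔
          g • x' = x') ∧
    (∀ x y : V, T.Adj x y →
        Quot.mk (collapseRel G u v) x ≠ Quot.mk (collapseRel G u v) y →
        ∃ x' y' : V, T.Adj x' y' ∧ ∀ g : G,
          (Quot.mk (collapseRel G u v) (g • x) = Quot.mk (collapseRel G u v) x ∧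
           Quot.mk (collapseRel G u v) (g • y) = Quot.mk (collapseRel G u v) y) ↔
          (g • x' = x' ∧ g • y' = y')) :=
  collapse_stabilizers_general T hT hpres u v he hstab horb
end

section
/- Let G act on a tree T without edge inversions and suppose s, t ∈ G are elliptic elements such that no nontrivial power of s or of t fixes a given edge e, and the fixed point sets of ⟨s⟩ and ⟨t⟩ lie in different components of T minus (the interior of) e. Then ⟨s, t⟩ is a free group of rank 2. -/
open SimpleGraph

section Aux

variable {G V : Type*} [Group G] [MulAction G V]

/-- Every vertex lies on the `a`-side or the `b`-side after deleting the edge. -/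
lemma pp_side_total (T : SimpleGraph V) (hconn : T.Connected) {a b : V} (x : V) :
    (T.deleteEdges {s(a, b)}).Reachable x a ∨ (T.deleteEdges {s(a, b)}).Reachable x b := by
  have main : ∀ {u w : V}, T.Walk u w →
      ((T.deleteEdges {s(a, b)}).Reachable w a ∨ (T.deleteEdges {s(a, b)}).Reachable w b) →
      ((T.deleteEdges {s(a, b)}).Reachable u a ∨ (T.deleteEdges {s(a, b)}).Reachable u b) := by
    intro u w p
    induction p with
    | nil => exact id
    | @cons u' v' w' h p ih =>
      intro hv
      by_cases hE : s(u', v') = s(a, b)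
      · rw [Sym2.eq_iff] at hE
        rcases hE with ⟨rfl, rfl⟩ | ⟨rfl, rfl⟩
        · exact Or.inl (Reachable.refl _)
        · exact Or.inr (Reachable.refl _)
      · have hadj : (T.deleteEdges {s(a, b)}).Adj u' v' := by
          rw [deleteEdges_adj]
          exact ⟨h, by simpa using hE⟩
        rcases ih hv with h' | h'
        · exact Or.inl (hadj.reachable.trans h')
        · exact Or.inr (hadj.reachable.trans h')
  obtain ⟨p⟩ := hconn x a
  exact main p (Or.inl (Reachable.refl a))

lemma pp_not_reach (T : SimpleGraph V) (hT : T.IsTree) {a b : V} (he : T.Adj a b) :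
    ¬ (T.deleteEdges {s(a, b)}).Reachable a b := by
  have hbridge : T.IsBridge s(a, b) :=
    (isAcyclic_iff_forall_adj_isBridge.mp hT.IsAcyclic) he
  exact isBridge_iff.mp hbridge

/-- Key crossing lemma: if `g` fixes a vertex `c` on the `a`-side, `x` is on the
`b`-side, and `g • x` is also on the `b`-side, then `g` fixes the edge `{a,b}`. -/
lemma pp_cross (T : SimpleGraph V) (hT : T.IsTree) (hpres : PreservesAdj G T)
    {a b : V} (he : T.Adj a b) (g : G) {c : V} (hc : g • c = c)
    (hca : (T.deleteEdges {s(a, b)}).Reachable c a)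
    {x : V} (hx : (T.deleteEdges {s(a, b)}).Reachable x b)
    (hgx : (T.deleteEdges {s(a, b)}).Reachable (g • x) b) :
    g • a = a ∧ g • b = b := by
  classical
  set T' := T.deleteEdges {s(a, b)} with hT'
  have hle : T' ≤ T := deleteEdges_le _
  have hedges : ∀ {u v : V} (p : T'.Walk u v) (e : Sym2 V), e ∈ p.edges → e ∈ T.edgeSet := by
    intro u v p e hep
    exact edgeSet_mono hle (p.edges_subset_edgeSet hep)
  -- extract paths
  obtain ⟨q0⟩ := hx
  obtain ⟨q0'⟩ := hgx
  obtain ⟨r0⟩ := hca.symm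
  set q : T'.Walk x b := (q0.toPath : T'.Path x b).val with hqdef
  set q' : T'.Walk (g • x) b := (q0'.toPath : T'.Path (g • x) b).val with hq'def
  set r : T'.Walk a c := (r0.toPath : T'.Path a c).val with hrdef
  have hqP : q.IsPath := q0.toPath.prop
  have hq'P : q'.IsPath := q0'.toPath.prop
  have hrP : r.IsPath := r0.toPath.prop
  -- sides of supports
  have hq_side : ∀ v ∈ q.support, T'.Reachable v b := fun v hv => ⟨q.dropUntil v hv⟩
  have hq'_side : ∀ v ∈ q'.support, T'.Reachable v b := fun v hv => ⟨q'.dropUntil v hv⟩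
  have hr_side : ∀ v ∈ r.support, T'.Reachable v a :=
    fun v hv => ⟨(r.takeUntil v hv).reverse⟩
  have hnr : ¬ T'.Reachable a b := pp_not_reach T hT he
  have hdisj : ∀ v ∈ q.support, v ∉ r.support := by
    intro v h1 h2
    exact hnr (((hr_side v h2).symm).trans (hq_side v h1))
  have hdisj' : ∀ v ∈ q'.support, v ∉ r.support := by
    intro v h1 h2
    exact hnr (((hr_side v h2).symm).trans (hq'_side v h1))
  -- build the two paths in T
  let w : T.Walk x c :=
    (q.transfer T (hedges q)).append (SimpleGraph.Walk.cons he.symm (r.transfer T (hedges r)))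
  let w' : T.Walk (g • x) c :=
    (q'.transfer T (hedges q')).append (SimpleGraph.Walk.cons he.symm (r.transfer T (hedges r)))
  have hswsup : w.support = q.support ++ r.support := by
    simp [w, SimpleGraph.Walk.support_append, SimpleGraph.Walk.support_transfer]
  have hsw'sup : w'.support = q'.support ++ r.support := by
    simp [w', SimpleGraph.Walk.support_append, SimpleGraph.Walk.support_transfer]
  have hwP : w.IsPath := by
    rw [SimpleGraph.Walk.isPath_def, hswsup]
    exact List.Nodup.append hqP.support_nodup hrP.support_nodup hdisj
  have hw'P : w'.IsPath := by
    rw [SimpleGraph.Walk.isPath_def, hsw'sup]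
    exact List.Nodup.append hq'P.support_nodup hrP.support_nodup hdisj'
  -- the image of w under g
  let φ : T →g T := ⟨fun v => g • v, fun {u v} h => hpres g u v h⟩
  have hφinj : Function.Injective φ := MulAction.injective g
  let gw : T.Walk (g • x) c := (w.map φ).copy rfl hc
  have hgwP : gw.IsPath := by
    rw [SimpleGraph.Walk.isPath_copy]
    exact w.map_isPath_of_injective hφinj hwP
  -- uniqueness of paths in a tree
  have heq : gw = w' := by
    have := hT.IsAcyclic.path_unique ⟨gw, hgwP⟩ ⟨w', hw'P⟩
    exact Subtype.ext_iff.mp this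
  have hsup : (q.support.map (fun v => g • v)) ++ (r.support.map (fun v => g • v))
      = q'.support ++ r.support := by
    have h1 := congrArg SimpleGraph.Walk.support heq
    rw [SimpleGraph.Walk.support_copy, SimpleGraph.Walk.support_map, hswsup, hsw'sup,
      List.map_append] at h1
    exact h1
  have hlen : (q.support.map (fun v => g • v)).length = q'.support.length := by
    have h1 := congrArg List.length hsup
    simp only [List.length_append, List.length_map] at h1 ⊢
    omega
  obtain ⟨h1, h2⟩ := List.append_inj hsup hlen
  constructor
  · -- g • a = a from the head of r
    have hr1 : r.support = a :: r.support.tail := r.support_eq_cons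
    rw [hr1, List.map_cons] at h2
    exact (List.cons.injEq _ _ _ _).mp h2 |>.1
  · -- g • b = b from the last entry of q
    have h3 := congrArg List.reverse h1
    rw [← List.map_reverse, ← SimpleGraph.Walk.support_reverse,
      ← SimpleGraph.Walk.support_reverse] at h3
    rw [q.reverse.support_eq_cons, q'.reverse.support_eq_cons, List.map_cons] at h3
    exact (List.cons.injEq _ _ _ _).mp h3 |>.1

end Aux

section MainAux

open Monoid.CoprodI Cardinal Pointwise

variable {G V : Type*} [Group G] [MulAction G V]

/-- Ping-пong with an explicit choice of sides. -/
lemma pp_aux (T : SimpleGraph V) (hT : T.IsTree)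
    (hpres : PreservesAdj G T)
    (s t : G) (a b : V) (he : T.Adj a b)
    (hsf : ∀ n : ℤ, n ≠ 0 → ¬ (s ^ n • a = a ∧ s ^ n • b = b))
    (htf : ∀ n : ℤ, n ≠ 0 → ¬ (t ^ n • a = a ∧ t ^ n • b = b))
    (x₀ y₀ : V) (hx₀ : s • x₀ = x₀) (hy₀ : t • y₀ = y₀)
    (hxA : (T.deleteEdges {s(a, b)}).Reachable x₀ a)
    (hyB : (T.deleteEdges {s(a, b)}).Reachable y₀ b) :
    Function.Injective (FreeGroup.lift (fun c : Bool => if c then s else t)) := by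
  classical
  set T' := T.deleteEdges {s(a, b)} with hT'def
  -- fixed points of powers
  have hx₀n : ∀ n : ℤ, s ^ n • x₀ = x₀ := by
    intro n
    have hmem : s ∈ MulAction.stabilizer G x₀ := hx₀
    exact Subgroup.zpow_mem _ hmem n
  have hy₀n : ∀ n : ℤ, t ^ n • y₀ = y₀ := by
    intro n
    have hmem : t ∈ MulAction.stabilizer G y₀ := hy₀
    exact Subgroup.zpow_mem _ hmem n
  -- ping-pong moves
  have key1 : ∀ n : ℤ, n ≠ 0 → ∀ x, T'.Reachable x b → T'.Reachable (s ^ n • x) a := by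
    intro n hn x hxb
    rcases pp_side_total T hT.isConnected (a := a) (b := b) (s ^ n • x) with h | h
    · exact h
    · exact absurd (pp_cross T hT hpres he (s ^ n) (hx₀n n) hxA hxb h) (hsf n hn)
  have hswap : s(b, a) = s(a, b) := Sym2.eq_swap
  have key2 : ∀ n : ℤ, n ≠ 0 → ∀ x, T'.Reachable x a → T'.Reachable (t ^ n • x) b := by
    intro n hn x hxa
    rcases pp_side_total T hT.isConnected (a := a) (b := b) (t ^ n • x) with h | h
    swap
    · exact h
    · -- use pp_cross with roles of a, b swapped
      have hc : (T.deleteEdges {s(b, a)}).Reachable y₀ b := by rw [hswap]; exact hyB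
      have hxa' : (T.deleteEdges {s(b, a)}).Reachable x a := by rw [hswap]; exact hxa
      have h' : (T.deleteEdges {s(b, a)}).Reachable (t ^ n • x) a := by rw [hswap]; exact h
      have := pp_cross T hT hpres he.symm (t ^ n) (hy₀n n) hc hxa' h'
      exact absurd (And.intro this.2 this.1) (htf n hn)
  -- now run the free-product ping-pong
  set aF : Bool → G := fun c : Bool => if c then s else t with haF
  have hlift : FreeGroup.lift aF =
      (Monoid.CoprodI.lift fun i : Bool => FreeGroup.lift fun _ : Unit => aF i).comp
        (@freeGroupEquivCoprodI Bool).toMonoidHom := by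
    ext i
    simp
  show Function.Injective (FreeGroup.lift aF)
  rw [hlift, MonoidHom.coe_comp]
  refine Function.Injective.comp ?_ (MulEquiv.injective freeGroupEquivCoprodI)
  let H : Bool → Type _ := fun _ => FreeGroup Unit
  let f : ∀ i : Bool, H i →* G := fun i => FreeGroup.lift fun _ => aF i
  let X : Bool → Set V := fun i => if i then {v | T'.Reachable v a} else {v | T'.Reachable v b}
  apply Monoid.CoprodI.lift_injective_of_ping_pong f _ X
  · -- nonempty
    intro i
    cases i
    · exact ⟨b, Reachable.refl b⟩
    · exact ⟨a, Reachable.refl a⟩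
  · -- pairwise disjoint
    intro i j hij
    have hd : Disjoint {v | T'.Reachable v a} {v | T'.Reachable v b} := by
      rw [Set.disjoint_left]
      intro v hva hvb
      exact pp_not_reach T hT he ((hva.symm).trans hvb)
    match i, j, hij with
    | true, false, _ => exact hd
    | false, true, _ => exact hd.symm
  · -- the ping-pong condition
    intro i j hij
    refine FreeGroup.freeGroupUnitEquivInt.forall_congr_left.mpr ?_
    intro n hne1
    change FreeGroup.lift (fun _ : Unit => aF i) (FreeGroup.of () ^ n) • X j ⊆ X i
    simp only [map_zpow, FreeGroup.lift_apply_of]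
    have hnne0 : n ≠ 0 := by
      rintro rfl
      apply hne1
      simp [H, FreeGroup.freeGroupUnitEquivInt]
    intro v hv
    rw [Set.mem_smul_set] at hv
    obtain ⟨u, hu, rfl⟩ := hv
    match i, j, hij with
    | true, false, _ => exact key1 n hnne0 u hu
    | false, true, _ => exact key2 n hnne0 u hu
  · -- cardinality condition
    right
    refine ⟨true, ?_⟩
    show (3 : Cardinal) ≤ #(FreeGroup Unit)
    rw [FreeGroup.freeGroupUnitEquivInt.cardinal_eq, Cardinal.mk_denumerable]
    exact le_of_lt (Cardinal.nat_lt_aleph0 3)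

end MainAux

/-- Ping-pong on a tree: if `s, t` are elliptic, no nontrivial power of `s` or `t` fixes
the edge `{a,b}`, and the fixed-point sets of `⟨s⟩` and `⟨t⟩` are separated by this edge
(not reachable from each other after deleting it), then `⟨s, t⟩` is free of rank 2. -/
theorem pingpong_free {G V : Type*} [Group G] [MulAction G V]
    (T : SimpleGraph V) (hT : T.IsTree)
    (hpres : PreservesAdj G T) (hinv : NoInversions G T)
    (s t : G) (a b : V) (he : T.Adj a b)
    (hs : ∃ x : V, s • x = x) (ht : ∃ x : V, t • x = x)
    (hsf : ∀ n : ℤ, n ≠ 0 → ¬ (s ^ n • a = a ∧ s ^ n • b = b))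
    (htf : ∀ n : ℤ, n ≠ 0 → ¬ (t ^ n • a = a ∧ t ^ n • b = b))
    (hsep : ∀ x y : V, s • x = x → t • y = y →
      ¬ (T.deleteEdges {s(a, b)}).Reachable x y) :
    Function.Injective (FreeGroup.lift (fun c : Bool => if c then s else t)) := by
  obtain ⟨x₀, hx₀⟩ := hs
  obtain ⟨y₀, hy₀⟩ := ht
  have hswap : s(b, a) = s(a, b) := Sym2.eq_swap
  have hsf' : ∀ n : ℤ, n ≠ 0 → ¬ (s ^ n • b = b ∧ s ^ n • a = a) := by
    intro n hn h; exact hsf n hn ⟨h.2, h.1⟩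
  have htf' : ∀ n : ℤ, n ≠ 0 → ¬ (t ^ n • b = b ∧ t ^ n • a = a) := by
    intro n hn h; exact htf n hn ⟨h.2, h.1⟩
  rcases pp_side_total T hT.isConnected (a := a) (b := b) x₀ with hxa | hxb <;>
    rcases pp_side_total T hT.isConnected (a := a) (b := b) y₀ with hya | hyb
  · exact absurd (hxa.trans hya.symm) (hsep x₀ y₀ hx₀ hy₀)
  · exact pp_aux T hT hpres s t a b he hsf htf x₀ y₀ hx₀ hy₀ hxa hyb
  · -- swapped sides: apply pp_aux with a and b interchanged
    refine pp_aux T hT hpres s t b a he.symm hsf' htf' x₀ y₀ hx₀ hy₀ ?_ ?_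
    · rw [hswap]; exact hxb
    · rw [hswap]; exact hya
  · exact absurd (hxb.trans hyb.symm) (hsep x₀ y₀ hx₀ hy₀)
end
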